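/- Let M be a maximum matching of a bipartite graph G with Dulmage–Mendelsohn classes E (even), O (odd), U (unreachable). Then every vertex of O ∪ U is matched by M, and |M| = |O| + |U|/2. -/

import Mathlib

open SimpleGraph

/-- Edges of a list alternate w.r.t. membership in `S`; the flag records whether
the next edge must belong to `S`. -/
def altEdges {V : Type*} (S : Set (Sym2 V)) : Bool → List (Sym2 V) → Prop
  | _, [] => True
  | flag, e :: rest => (e ∈ S ↔ flag = true) ∧ altEdges S (!flag) rest

/-- `v` is reachable from some `M`-unmatched vertex by an alternating path
(starting with a non-matching edge) of even length. -/
def EvenVtx {V : Type*} (G : SimpleGraph V) (M : G.Subgraph) (v : V) : Prop :=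
  ∃ u, u ∉ M.verts ∧ ∃ p : G.Walk u v,
    p.IsPath ∧ altEdges M.edgeSet false p.edges ∧ Even p.length

/-- `v` is reachable from some `M`-unmatched vertex by an alternating path of
odd length. -/
def OddVtx {V : Type*} (G : SimpleGraph V) (M : G.Subgraph) (v : V) : Prop :=
  ∃ u, u ∉ M.verts ∧ ∃ p : G.Walk u v,
    p.IsPath ∧ altEdges M.edgeSet false p.edges ∧ Odd p.length

/-- `v` is not reachable from any `M`-unmatched vertex by an alternating path. -/
def UnreachableVtx {V : Type*} (G : SimpleGraph V) (M : G.Subgraph) (v : V) : Prop :=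
  ∀ u (p : G.Walk u v), u ∉ M.verts → p.IsPath →
    altEdges M.edgeSet false p.edges → False

/-!
An unmatched vertex is even (via the trivial path), so unreachable vertices are matched, and an
unmatched odd vertex would end an augmenting path, contradicting maximality. Because closed walks
in a bipartite graph are even, any alternating walk can be shortened to an alternating path
between the same ends; so a vertex that is both even and odd yields an augmenting path (join the
two paths), and the matching partner of an odd vertex is even (extend the path by the matching
edge). The partner of a matched even vertex is odd, since its path must end with that matching
edge. Thus `M` pairs the odd vertices with the matched even ones, the matched vertices split as
`O ⊔ (E ∩ V(M)) ⊔ U`, and `2|M| = |V(M)| = 2|O| + |U|`.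
-/

section AltEdges

variable {V : Type*} {S T : Set (Sym2 V)}

theorem altEdges_append {b : Bool} {l₁ l₂ : List (Sym2 V)} :
    altEdges S b (l₁ ++ l₂) ↔
      altEdges S b l₁ ∧ altEdges S (b ^^ decide (Odd l₁.length)) l₂ := by
  induction l₁ generalizing b with
  | nil => simp [altEdges]
  | cons e l ih => simp [altEdges, ih, Nat.odd_add_one, -Nat.not_odd_iff_even, and_assoc]

theorem altEdges_reverse {b : Bool} {l : List (Sym2 V)} (h : altEdges S b l) :
    altEdges S (!(b ^^ decide (Odd l.length))) l.reverse := by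
  induction l generalizing b with
  | nil => trivial
  | cons e l ih =>
    obtain ⟨he, hl⟩ := h
    simpa [altEdges_append, altEdges, Nat.odd_add_one, ← Nat.not_odd_iff_even, he] using ih hl

theorem altEdges.congr {b : Bool} {l : List (Sym2 V)} (h : ∀ e ∈ l, e ∈ S ↔ e ∈ T)
    (hS : altEdges S b l) : altEdges T b l := by
  induction l generalizing b with
  | nil => trivial
  | cons e l ih =>
    exact ⟨(h e (by simp)).symm.trans hS.1, ih (fun e' he' ↦ h e' (by simp [he'])) hS.2⟩

end AltEdges

namespace SimpleGraph

variable {V : Type*} {G : SimpleGraph V} {M : G.Subgraph}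

theorem Coloring.even_length_iff_even_length (c : G.Coloring Bool) {u v : V}
    (p q : G.Walk u v) : Even p.length ↔ Even q.length := by
  rw [c.even_length_iff_congr, c.even_length_iff_congr]

theorem Walk.exists_isPath_altEdges (c : G.Coloring Bool) (S : Set (Sym2 V)) :
    ∀ {u v : V} (w : G.Walk u v) {b : Bool}, altEdges S b w.edges →
      ∃ p : G.Walk u v, p.IsPath ∧ altEdges S b p.edges
  | _, _, .nil, _, _ => ⟨.nil, .nil, trivial⟩
  | u, _, .cons hux w, b, h => by
    classical
    obtain ⟨p, hp, halt⟩ := exists_isPath_altEdges c S w h.2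
    by_cases hu : u ∈ p.support
    · refine ⟨p.dropUntil u hu, hp.dropUntil hu, ?_⟩
      have hodd : Odd (p.takeUntil u hu).length := by
        have hcycle := (c.even_length_iff_congr (.cons hux (p.takeUntil u hu))).mpr Iff.rfl
        simpa [Nat.even_add_one] using hcycle
      rw [← p.take_spec hu, Walk.edges_append, altEdges_append] at halt
      simpa [Walk.length_edges, hodd] using halt.2
    · exact ⟨.cons hux p, hp.cons hu, h.1, halt⟩

theorem Subgraph.IsMatching.deleteVerts (hM : M.IsMatching) {s : Set V}
    (hs : ∀ ⦃a b⦄, M.Adj a b → b ∈ s → a ∈ s) : (M.deleteVerts s).IsMatching := by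
  rintro a ⟨ha, has⟩
  obtain ⟨b, hab, huniq⟩ := hM ha
  exact ⟨b, deleteVerts_adj.mpr ⟨ha, has, hab.snd_mem, fun hbs ↦ has (hs hab hbs), hab⟩,
    fun b' hb' ↦ huniq b' (deleteVerts_adj.mp hb').2.2.2.2⟩

theorem Subgraph.IsMatching.sym2_eq_of_adj (hM : M.IsMatching) {a b x y : V} (hab : M.Adj a b)
    (hxy : M.Adj x y) (ha : a ∈ ({x, y} : Set V)) : s(a, b) = s(x, y) := by
  rcases ha with rfl | rfl
  · rw [hM.eq_of_adj_left hab hxy]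
  · rw [hM.eq_of_adj_left hab hxy.symm, Sym2.eq_swap]

theorem Subgraph.IsMatching.exists_swap (hM : M.IsMatching) {u x y : V} (hux : G.Adj u x)
    (hxy : M.Adj x y) (hu : u ∉ M.verts) :
    ∃ M' : G.Subgraph, M'.IsMatching ∧ M'.verts = (M.verts \ {x, y}) ∪ {u, x} ∧
      ∀ e, e ≠ s(x, y) → e ≠ s(u, x) → (e ∈ M'.edgeSet ↔ e ∈ M.edgeSet) := by
  refine ⟨M.deleteVerts {x, y} ⊔ G.subgraphOfAdj hux, ?_, rfl, ?_⟩
  · have hpair : ∀ ⦃a b⦄, M.Adj a b → b ∈ ({x, y} : Set V) → a ∈ ({x, y} : Set V) :=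
      fun a b hab hb ↦ Sym2.mem_iff.mp (hM.sym2_eq_of_adj hab.symm hxy hb ▸ Sym2.mem_mk_right b a)
    refine (hM.deleteVerts hpair).sup (.subgraphOfAdj hux) ?_
    refine Set.disjoint_of_subset (Subgraph.support_subset_verts _)
      (Subgraph.support_subset_verts _) (Set.disjoint_left.mpr ?_)
    rintro a ⟨haM, haxy⟩ (rfl | rfl)
    · exact hu haM
    · exact haxy (.inl rfl)
  · intro e hexy heux
    induction e with
    | _ a b =>
    rw [Subgraph.edgeSet_sup, Set.mem_union, edgeSet_subgraphOfAdj, Set.mem_singleton_iff,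
      or_iff_left heux, Subgraph.mem_edgeSet, Subgraph.mem_edgeSet, Subgraph.deleteVerts_adj]
    refine ⟨fun h ↦ h.2.2.2.2, fun hab ↦ ⟨hab.fst_mem, fun ha ↦ ?_, hab.snd_mem, fun hb ↦ ?_, hab⟩⟩
    · exact hexy (hM.sym2_eq_of_adj hab hxy ha)
    · exact hexy (Sym2.eq_swap.trans (hM.sym2_eq_of_adj hab.symm hxy hb))

structure Walk.IsAugmentingPath (M : G.Subgraph) {u v : V} (p : G.Walk u v) : Prop where
  isPath : p.IsPath
  alternating : altEdges M.edgeSet false p.edges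
  odd_length : Odd p.length
  start_notMem : u ∉ M.verts
  end_notMem : v ∉ M.verts

/-- Swapping the first two edges of an augmenting path leaves an augmenting path
two edges shorter. -/
theorem Walk.IsAugmentingPath.exists_isMatching :
    ∀ {M : G.Subgraph} {u v : V} {p : G.Walk u v}, M.IsMatching → p.IsAugmentingPath M →
      ∃ N : G.Subgraph, N.IsMatching ∧ N.verts = insert u (insert v M.verts)
  | _, _, _, .nil, _, hp => absurd hp.odd_length (by simp)
  | M, u, v, .cons huv .nil, hM, hp => by
    refine ⟨M ⊔ G.subgraphOfAdj huv, hM.sup (.subgraphOfAdj huv) ?_, ?_⟩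
    · rw [hM.support_eq_verts]
      refine Set.disjoint_of_subset_right (Subgraph.support_subset_verts _)
        (Set.disjoint_left.mpr ?_)
      rintro a haM (rfl | rfl)
      exacts [hp.start_notMem haM, hp.end_notMem haM]
    · ext a
      simp
  | M, u, v, .cons (v := x) hux (.cons (v := y) hGxy r), hM, hp => by
    have hxy : M.Adj x y := Subgraph.mem_edgeSet.mp (hp.alternating.2.1.mpr rfl)
    have hxM := hxy.fst_mem
    have hyM := hxy.snd_mem
    obtain ⟨M', hM', hverts, hedges⟩ := hM.exists_swap hux hxy hp.start_notMem
    obtain ⟨⟨hr, -⟩, hur⟩ : (r.IsPath ∧ x ∉ r.support) ∧ u ∉ (cons hGxy r).support := by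
      simpa only [Walk.cons_isPath_iff] using hp.isPath
    have hnodup := hp.isPath.isTrail.edges_nodup
    simp only [Walk.edges_cons, List.nodup_cons, List.mem_cons] at hnodup
    have hrM' : r.IsAugmentingPath M' := by
      refine ⟨hr, hp.alternating.2.2.congr fun e he ↦ (hedges e ?_ ?_).symm, ?_, ?_, ?_⟩
      · rintro rfl; exact hnodup.2.1 he
      · rintro rfl; exact hnodup.1 (.inr he)
      · simpa [Nat.odd_add_one] using hp.odd_length
      · rw [hverts]
        rintro (⟨-, hy⟩ | (rfl | rfl))
        exacts [hy (.inr rfl), hp.start_notMem hyM, hxy.ne rfl]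
      · rw [hverts]
        rintro (⟨hv, -⟩ | (rfl | rfl))
        exacts [hp.end_notMem hv, hur (List.mem_cons_of_mem x r.end_mem_support),
          hp.end_notMem hxM]
    obtain ⟨N, hN, hNverts⟩ := hrM'.exists_isMatching hM'
    refine ⟨N, hN, ?_⟩
    rw [hNverts, hverts]
    ext a
    by_cases hax : a = x <;> by_cases hay : a = y <;> simp_all [or_left_comm]

theorem Subgraph.IsMatching.ncard_eq_ncard (hM : M.IsMatching) {s t : Set V}
    (hs : s ⊆ M.verts) (ht : t ⊆ M.verts) (hst : ∀ ⦃v w⦄, M.Adj v w → (v ∈ s ↔ w ∈ t)) :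
    s.ncard = t.ncard := by
  choose f hf huniq using fun v : M.verts ↦ hM v.2
  refine Set.ncard_congr (fun v hv ↦ f ⟨v, hs hv⟩) (fun v hv ↦ (hst (hf _)).mp hv)
    (fun a b ha hb hab ↦ hM.eq_of_adj_right (hf ⟨a, hs ha⟩) (hab ▸ hf ⟨b, hs hb⟩)) fun w hw ↦ ?_
  obtain ⟨v, hwv, -⟩ := hM (ht hw)
  exact ⟨v, (hst hwv.symm).mpr hw, hM.eq_of_adj_left (hf _) hwv.symm⟩

theorem Subgraph.IsMatching.not_isAugmentingPath [Finite V] (hM : M.IsMatching)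
    (hmax : ∀ N : G.Subgraph, N.IsMatching → N.verts.ncard ≤ M.verts.ncard) {u v : V}
    (p : G.Walk u v) : ¬p.IsAugmentingPath M := by
  intro hp
  obtain ⟨N, hN, hNverts⟩ := hp.exists_isMatching hM
  have huv : u ≠ v := by
    rintro rfl
    simpa [Walk.length_eq_zero_iff.mpr (Walk.isPath_iff_nil.mp hp.isPath)] using hp.odd_length
  have := hmax N hN
  rw [hNverts, Set.ncard_insert_of_notMem (by simp [huv, hp.start_notMem]),
    Set.ncard_insert_of_notMem hp.end_notMem] at this
  omega

theorem Subgraph.IsMatching.two_mul_ncard_edgeSet [Finite V] (hM : M.IsMatching) :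
    2 * M.edgeSet.ncard = M.verts.ncard := by
  classical
  have := Fintype.ofFinite V
  have hdeg (v : V) : M.spanningCoe.degree v = if v ∈ M.verts then 1 else 0 := by
    rw [degree_spanningCoe]
    split_ifs with hv
    exacts [isMatching_iff_forall_degree.mp hM v hv, degree_of_notMem_verts hv]
  rw [← Subgraph.edgeSet_spanningCoe, Set.ncard_eq_toFinset_card', ← edgeFinset,
    ← sum_degrees_eq_twice_card_edges]
  simp [hdeg, Finset.sum_boole, Set.ncard_eq_toFinset_card']

end SimpleGraph

section VertexClasses

variable {V : Type*} {G : SimpleGraph V} {M : G.Subgraph} {v w : V}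

theorem evenVtx_of_notMem (hv : v ∉ M.verts) : EvenVtx G M v :=
  ⟨v, hv, .nil, .nil, trivial, by simp⟩

theorem unreachableVtx_iff : UnreachableVtx G M v ↔ ¬EvenVtx G M v ∧ ¬OddVtx G M v := by
  refine ⟨fun h ↦ ⟨fun ⟨u, hu, p, hp, halt, _⟩ ↦ h u p hu hp halt,
    fun ⟨u, hu, p, hp, halt, _⟩ ↦ h u p hu hp halt⟩, fun ⟨hE, hO⟩ u p hu hp halt ↦ ?_⟩
  rcases Nat.even_or_odd p.length with h | h
  exacts [hE ⟨u, hu, p, hp, halt, h⟩, hO ⟨u, hu, p, hp, halt, h⟩]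

theorem UnreachableVtx.mem_verts (h : UnreachableVtx G M v) : v ∈ M.verts :=
  by_contra fun hv ↦ (unreachableVtx_iff.mp h).1 (evenVtx_of_notMem hv)

theorem OddVtx.mem_verts [Finite V] (hM : M.IsMatching)
    (hmax : ∀ N : G.Subgraph, N.IsMatching → N.verts.ncard ≤ M.verts.ncard)
    (h : OddVtx G M v) : v ∈ M.verts := by
  obtain ⟨u, hu, p, hp, halt, hodd⟩ := h
  by_contra hv
  exact hM.not_isAugmentingPath hmax p ⟨hp, halt, hodd, hu, hv⟩

theorem EvenVtx.oddVtx_of_adj (hM : M.IsMatching) (h : EvenVtx G M v) (hvw : M.Adj v w) :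
    OddVtx G M w := by
  obtain ⟨u, hu, p, hp, halt, heven⟩ := h
  obtain ⟨x, q, hxv, rfl⟩ : ∃ (x : V) (q : G.Walk u x) (hxv : G.Adj x v), p = q.concat hxv := by
    cases p with
    | nil => exact absurd hvw.fst_mem hu
    | cons h p => exact Walk.exists_cons_eq_concat h p
  have hodd : Odd q.length := by simpa [Nat.even_add_one] using heven
  rw [Walk.edges_concat, List.concat_eq_append, altEdges_append] at halt
  have hxv : M.Adj x v := by simpa [altEdges, Walk.length_edges, hodd] using halt.2
  obtain rfl := hM.eq_of_adj_left hvw hxv.symm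
  exact ⟨u, hu, q, ((Walk.concat_isPath_iff _).mp hp).1, halt.1, hodd⟩

theorem OddVtx.evenVtx_of_adj (c : G.Coloring Bool) (h : OddVtx G M v) (hvw : M.Adj v w) :
    EvenVtx G M w := by
  obtain ⟨u, hu, p, -, halt, hodd⟩ := h
  have halt' : altEdges M.edgeSet false (p.concat hvw.adj_sub).edges := by
    rw [Walk.edges_concat, List.concat_eq_append, altEdges_append]
    simpa [altEdges, Walk.length_edges, hodd] using ⟨halt, hvw⟩
  obtain ⟨q, hq, hqalt⟩ := Walk.exists_isPath_altEdges c _ _ halt'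
  refine ⟨u, hu, q, hq, hqalt, (c.even_length_iff_even_length q (p.concat hvw.adj_sub)).mpr ?_⟩
  simpa [Nat.even_add_one] using hodd

theorem not_evenVtx_and_oddVtx [Finite V] (c : G.Coloring Bool) (hM : M.IsMatching)
    (hmax : ∀ N : G.Subgraph, N.IsMatching → N.verts.ncard ≤ M.verts.ncard) :
    ¬(EvenVtx G M v ∧ OddVtx G M v) := by
  rintro ⟨⟨u, hu, p, -, hpalt, hpeven⟩, ⟨u', hu', q, -, hqalt, hqodd⟩⟩
  have halt : altEdges M.edgeSet false (q.append p.reverse).edges := by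
    rw [Walk.edges_append, altEdges_append, Walk.edges_reverse]
    refine ⟨hqalt, ?_⟩
    simpa [Walk.length_edges, hqodd, Nat.not_odd_iff_even.mpr hpeven] using
      altEdges_reverse hpalt
  obtain ⟨r, hr, hralt⟩ := Walk.exists_isPath_altEdges c _ _ halt
  have hrodd : Odd r.length := by
    rw [← Nat.not_even_iff_odd, c.even_length_iff_even_length r (q.append p.reverse)]
    simp [Nat.even_add, hpeven, Nat.not_even_iff_odd.mpr hqodd]
  exact hM.not_isAugmentingPath hmax r ⟨hr, hralt, hrodd, hu', hu⟩

end VertexClasses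

section Count

variable {V : Type*} [Finite V] {G : SimpleGraph V} {M : G.Subgraph}

theorem ncard_oddVtx_eq_ncard_evenVtx_inter (c : G.Coloring Bool) (hM : M.IsMatching)
    (hmax : ∀ N : G.Subgraph, N.IsMatching → N.verts.ncard ≤ M.verts.ncard) :
    {v | OddVtx G M v}.ncard = ({v | EvenVtx G M v} ∩ M.verts).ncard :=
  hM.ncard_eq_ncard (fun _ hv ↦ hv.mem_verts hM hmax) Set.inter_subset_right
    fun _ _ hvw ↦ ⟨fun hv ↦ ⟨hv.evenVtx_of_adj c hvw, hvw.snd_mem⟩,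
      fun hw ↦ hw.1.oddVtx_of_adj hM hvw.symm⟩

theorem ncard_verts_eq_add (c : G.Coloring Bool) (hM : M.IsMatching)
    (hmax : ∀ N : G.Subgraph, N.IsMatching → N.verts.ncard ≤ M.verts.ncard) :
    M.verts.ncard = {v | OddVtx G M v}.ncard + ({v | EvenVtx G M v} ∩ M.verts).ncard +
      {v | UnreachableVtx G M v}.ncard := by
  have hverts : M.verts =
      {v | OddVtx G M v} ∪ ({v | EvenVtx G M v} ∩ M.verts) ∪ {v | UnreachableVtx G M v} := by
    ext v
    refine ⟨fun hv ↦ ?_, ?_⟩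
    · by_cases hO : OddVtx G M v
      · exact .inl (.inl hO)
      by_cases hE : EvenVtx G M v
      · exact .inl (.inr ⟨hE, hv⟩)
      · exact .inr (unreachableVtx_iff.mpr ⟨hE, hO⟩)
    · rintro ((h | h) | h)
      exacts [h.mem_verts hM hmax, h.2, UnreachableVtx.mem_verts h]
  have hOE : Disjoint {v | OddVtx G M v} ({v | EvenVtx G M v} ∩ M.verts) :=
    Set.disjoint_left.mpr fun _ hO hE ↦ not_evenVtx_and_oddVtx c hM hmax ⟨hE.1, hO⟩
  have hU : Disjoint ({v | OddVtx G M v} ∪ ({v | EvenVtx G M v} ∩ M.verts))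
      {v | UnreachableVtx G M v} := by
    refine Set.disjoint_right.mpr fun _ hU ↦ ?_
    rintro (hO | hE)
    exacts [(unreachableVtx_iff.mp hU).2 hO, (unreachableVtx_iff.mp hU).1 hE.1]
  conv_lhs => rw [hverts, Set.ncard_union_eq hU, Set.ncard_union_eq hOE]

end Count

/-- For a maximum matching `M` of a bipartite graph, every odd or unreachable
vertex is matched by `M`, and `|M| = |O| + |U|/2`
(stated multiplied by two: `2·|M| = 2·|O| + |U|`). -/
theorem dm_matched_and_size
    {V : Type*} [Fintype V] (G : SimpleGraph V)
    (side : V → Bool) (hbip : ∀ u v, G.Adj u v → side u ≠ side v)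
    (M : G.Subgraph) (hM : M.IsMatching)
    (hmax : ∀ N : G.Subgraph, N.IsMatching → N.verts.ncard ≤ M.verts.ncard) :
    (∀ v, OddVtx G M v ∨ UnreachableVtx G M v → v ∈ M.verts) ∧
    2 * M.edgeSet.ncard =
      2 * {v | OddVtx G M v}.ncard + {v | UnreachableVtx G M v}.ncard := by
  let c : G.Coloring Bool := Coloring.mk side fun h ↦ hbip _ _ h
  refine ⟨fun v hv ↦ hv.elim (·.mem_verts hM hmax) UnreachableVtx.mem_verts, ?_⟩
  rw [hM.two_mul_ncard_edgeSet, ncard_verts_eq_add c hM hmax,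
    ← ncard_oddVtx_eq_ncard_evenVtx_inter c hM hmax]
  ring
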